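/- arXiv:1209.6574 — 3 statements merged into one kernel-verified Lean document; each statement's English description precedes it below -/
import Mathlib

section
/- Let F be a differentiable real- (or complex-) valued function on the interval [R, 2R] with R > 0. Then sup_{t ∈ [R,2R]} |F(t)|² ≤ |F(R)|² + 2 (∫_R^{2R} |F(t)|² dt)^{1/2} · (∫_R^{2R} |F'(t)|² dt)^{1/2}. -/
/-!
Since `d/dt ‖F t‖² = 2 ⟪F t, F' t⟫ ≤ 2 ‖F t‖ ‖F' t‖`, the fundamental theorem of calculus bounds
`‖F t‖² - ‖F R‖²` by `2 ∫ ‖F‖ ‖F'‖` over `[R, 2R]`, and Cauchy–Schwarz in `L²` bounds this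
integral by the product of the `L²` norms of `F` and `F'`.
-/

open MeasureTheory Set

lemma integral_norm_mul_norm_le_of_memLp_two {α E : Type*} [MeasurableSpace α] {μ : Measure α}
    [NormedAddCommGroup E] {f g : α → E} (hf : MemLp f 2 μ) (hg : MemLp g 2 μ) :
    ∫ x, ‖f x‖ * ‖g x‖ ∂μ ≤
      (∫ x, ‖f x‖ ^ 2 ∂μ) ^ ((1 : ℝ) / 2) * (∫ x, ‖g x‖ ^ 2 ∂μ) ^ ((1 : ℝ) / 2) := by
  simpa only [Real.rpow_two] using integral_mul_norm_le_Lp_mul_Lq (μ := μ)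
    Real.HolderConjugate.two_two (by simpa using hf) (by simpa using hg)

section Derivative

variable {E : Type*} [NormedAddCommGroup E] {F F' : ℝ → E} {a b : ℝ}

lemma aestronglyMeasurable_restrict_Icc_of_hasDerivAt [NormedSpace ℝ E] [CompleteSpace E]
    (hdiff : ∀ t ∈ Icc a b, HasDerivAt F (F' t) t) :
    AEStronglyMeasurable F' (volume.restrict (Icc a b)) :=
  (aestronglyMeasurable_deriv F _).congr <|
    ae_restrict_of_forall_mem measurableSet_Icc fun t ht => (hdiff t ht).deriv

variable [InnerProductSpace ℝ E]

lemma norm_sq_sub_norm_sq_le_integral_norm_mul_norm (hab : a ≤ b)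
    (hdiff : ∀ t ∈ Icc a b, HasDerivAt F (F' t) t)
    (hint : IntegrableOn (fun t => ‖F t‖ * ‖F' t‖) (Icc a b)) :
    ‖F b‖ ^ 2 - ‖F a‖ ^ 2 ≤ ∫ t in a..b, 2 * (‖F t‖ * ‖F' t‖) := by
  refine intervalIntegral.sub_le_integral_of_hasDeriv_right_of_le hab
    (fun t ht => (hdiff t ht).norm_sq.continuousAt.continuousWithinAt)
    (fun t ht => (hdiff t (Ioo_subset_Icc_self ht)).norm_sq.hasDerivWithinAt)
    (hint.const_mul 2) fun t _ => ?_
  have := real_inner_le_norm (F t) (F' t)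
  linarith

lemma norm_sq_le_of_hasDerivAt_Icc [CompleteSpace E]
    (hdiff : ∀ t ∈ Icc a b, HasDerivAt F (F' t) t)
    (hF : IntegrableOn (fun t => ‖F t‖ ^ 2) (Icc a b))
    (hF' : IntegrableOn (fun t => ‖F' t‖ ^ 2) (Icc a b)) {t : ℝ} (ht : t ∈ Icc a b) :
    ‖F t‖ ^ 2 ≤ ‖F a‖ ^ 2 + 2 * (∫ s in Icc a b, ‖F s‖ ^ 2) ^ ((1 : ℝ) / 2) *
      (∫ s in Icc a b, ‖F' s‖ ^ 2) ^ ((1 : ℝ) / 2) := by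
  have hF_meas : AEStronglyMeasurable F (volume.restrict (Icc a b)) :=
    ContinuousOn.aestronglyMeasurable (fun s hs => (hdiff s hs).continuousAt.continuousWithinAt)
      measurableSet_Icc
  have hF_L2 : MemLp F 2 (volume.restrict (Icc a b)) :=
    (memLp_two_iff_integrable_sq_norm hF_meas).mpr hF
  have hF'_L2 : MemLp F' 2 (volume.restrict (Icc a b)) :=
    (memLp_two_iff_integrable_sq_norm
      (aestronglyMeasurable_restrict_Icc_of_hasDerivAt hdiff)).mpr hF'
  have hint : IntegrableOn (fun s => ‖F s‖ * ‖F' s‖) (Icc a b) :=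
    hF_L2.norm.integrable_mul hF'_L2.norm
  have hsub : Icc a t ⊆ Icc a b := Icc_subset_Icc_right ht.2
  calc ‖F t‖ ^ 2 = ‖F a‖ ^ 2 + (‖F t‖ ^ 2 - ‖F a‖ ^ 2) := by ring
    _ ≤ ‖F a‖ ^ 2 + ∫ s in a..t, 2 * (‖F s‖ * ‖F' s‖) := by
      gcongr
      exact norm_sq_sub_norm_sq_le_integral_norm_mul_norm ht.1 (fun s hs => hdiff s (hsub hs))
        (hint.mono_set hsub)
    _ ≤ ‖F a‖ ^ 2 + ∫ s in Icc a b, 2 * (‖F s‖ * ‖F' s‖) := by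
      rw [intervalIntegral.integral_of_le ht.1]
      exact add_le_add_right (setIntegral_mono_set (hint.const_mul 2)
        (ae_of_all _ fun s => by positivity) (Ioc_subset_Icc_self.trans hsub).eventuallyLE) _
    _ ≤ _ := by
      rw [integral_const_mul, mul_assoc]
      gcongr
      exact integral_norm_mul_norm_le_of_memLp_two hF_L2 hF'_L2

end Derivative

theorem stmt0_general (R : ℝ) (F F' : ℝ → ℂ)
    (hdiff : ∀ t ∈ Icc R (2 * R), HasDerivAt F (F' t) t)
    (hF : IntegrableOn (fun t => ‖F t‖ ^ 2) (Icc R (2 * R)))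
    (hF' : IntegrableOn (fun t => ‖F' t‖ ^ 2) (Icc R (2 * R))) :
    (⨆ t ∈ Icc R (2 * R), ‖F t‖ ^ 2) ≤
      ‖F R‖ ^ 2 +
        2 * (∫ t in Icc R (2 * R), ‖F t‖ ^ 2) ^ ((1 : ℝ) / 2) *
          (∫ t in Icc R (2 * R), ‖F' t‖ ^ 2) ^ ((1 : ℝ) / 2) := by
  have hbound_nonneg : 0 ≤ ‖F R‖ ^ 2 +
      2 * (∫ t in Icc R (2 * R), ‖F t‖ ^ 2) ^ ((1 : ℝ) / 2) *
        (∫ t in Icc R (2 * R), ‖F' t‖ ^ 2) ^ ((1 : ℝ) / 2) := by positivity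
  exact Real.iSup_le (fun t => Real.iSup_le
    (fun ht => norm_sq_le_of_hasDerivAt_Icc hdiff hF hF' ht) hbound_nonneg) hbound_nonneg

/-- If `F` is differentiable on `[R, 2R]`, `R > 0`, with derivative `F'`, and `|F|²`, `|F'|²`
are integrable on `[R, 2R]`, then for every `t ∈ [R, 2R]`,
`|F t|² ≤ |F R|² + 2 (∫_R^{2R} |F|²)^{1/2} (∫_R^{2R} |F'|²)^{1/2}`
(i.e. the sup over `[R,2R]` of `|F|²` is bounded by the right-hand side). -/
theorem stmt0 (R : ℝ) (hR : 0 < R) (F F' : ℝ → ℂ)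
    (hdiff : ∀ t ∈ Icc R (2 * R), HasDerivAt F (F' t) t)
    (hF : IntegrableOn (fun t => ‖F t‖ ^ 2) (Icc R (2 * R)))
    (hF' : IntegrableOn (fun t => ‖F' t‖ ^ 2) (Icc R (2 * R))) :
    (⨆ t ∈ Icc R (2 * R), ‖F t‖ ^ 2) ≤
      ‖F R‖ ^ 2 +
        2 * (∫ t in Icc R (2 * R), ‖F t‖ ^ 2) ^ ((1 : ℝ) / 2) *
          (∫ t in Icc R (2 * R), ‖F' t‖ ^ 2) ^ ((1 : ℝ) / 2) :=
  stmt0_general R F F' hdiff hF hF'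
end

section
/- Let u(x,t) = (F * Φ_t)(x) solve the heat equation on ℝⁿ × ℝ₊ with initial data F ∈ L²(ℝⁿ), where Φ_t is the heat kernel. Then for every t > 0 and H = ℝ^k × {0}, the restriction u(·,t)|_H lies in L²(ℝ^k) and ‖u(·,t)|_H‖_{L²(ℝ^k)} ≤ (4πt)^{-(n-k)/4} · ‖F‖_{L²(ℝⁿ)}. -/
/-!
Since `Φ_t` is a probability density, Jensen's inequality gives
`|u(x, t)|² ≤ ∫ |F(x - y)|² Φ_t(y) dy` pointwise. Integrating over `x ∈ H` and exchanging the
integrals bounds `‖u(·,t)|_H‖²` by `‖F‖²` times `sup_y ∫_H Φ_t(x - y) dx`. The heat kernel of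
`ℝ^k × ℝ^{n-k}` is the product of the heat kernels of the factors, so this last integral is the
`(n-k)`-dimensional heat kernel at a single point, which is at most `(4πt)^{-(n-k)/2}`.
-/

open MeasureTheory Real

noncomputable section

/-- `ℝ^n` with its Euclidean structure. -/
abbrev E (n : ℕ) : Type := EuclideanSpace ℝ (Fin n)

/-- The identification `ℝ^k × ℝ^m ≃ ℝ^{k+m}`, `(x', x'') ↦ x`. -/
def app {k m : ℕ} (a : E k) (b : E m) : E (k + m) :=
  (EuclideanSpace.equiv (Fin (k + m)) ℝ).symm
    (Fin.append ((EuclideanSpace.equiv (Fin k) ℝ) a) ((EuclideanSpace.equiv (Fin m) ℝ) b))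

open scoped ENNReal

section Jensen

variable {α : Type*} [MeasurableSpace α] {μ : Measure α}

theorem ENNReal.sq_lintegral_mul_le_lintegral_sq_mul {f Φ : α → ℝ≥0∞} (hf : AEMeasurable f μ)
    (hΦ : AEMeasurable Φ μ) (hΦ1 : ∫⁻ a, Φ a ∂μ = 1) :
    (∫⁻ a, f a * Φ a ∂μ) ^ 2 ≤ ∫⁻ a, f a ^ 2 * Φ a ∂μ := by
  have hsplit : ∀ a, (f a ^ 2 * Φ a) ^ (2⁻¹ : ℝ) * Φ a ^ (2⁻¹ : ℝ) = f a * Φ a := fun a => by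
    rw [ENNReal.mul_rpow_of_nonneg _ _ (by norm_num), mul_assoc,
      ← ENNReal.rpow_add_of_nonneg _ _ (by norm_num) (by norm_num), ← ENNReal.rpow_natCast,
      ← ENNReal.rpow_mul]
    norm_num
  have hHolder := ENNReal.lintegral_mul_norm_pow_le ((hf.pow_const 2).mul hΦ) hΦ
    (by norm_num : (0 : ℝ) ≤ 2⁻¹) (by norm_num : (0 : ℝ) ≤ 2⁻¹) (by norm_num)
  simp only [Pi.mul_apply, hsplit, hΦ1, ENNReal.one_rpow, mul_one] at hHolder
  calc (∫⁻ a, f a * Φ a ∂μ) ^ 2 ≤ ((∫⁻ a, f a ^ 2 * Φ a ∂μ) ^ (2⁻¹ : ℝ)) ^ 2 := by gcongr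
    _ = ∫⁻ a, f a ^ 2 * Φ a ∂μ := by
      rw [← ENNReal.rpow_natCast, ← ENNReal.rpow_mul]
      norm_num

theorem enorm_integral_mul_ofReal_sq_le {𝕜 : Type*} [RCLike 𝕜] {g : α → 𝕜} {Φ : α → ℝ}
    (hg : AEMeasurable g μ) (hΦ : AEMeasurable Φ μ) (hΦ0 : ∀ a, 0 ≤ Φ a)
    (hΦ1 : ∫⁻ a, ENNReal.ofReal (Φ a) ∂μ = 1) :
    ‖∫ a, g a * (Φ a : 𝕜) ∂μ‖ₑ ^ 2 ≤ ∫⁻ a, ‖g a‖ₑ ^ 2 * ENNReal.ofReal (Φ a) ∂μ := by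
  have hnorm : ∀ a, ‖g a * (Φ a : 𝕜)‖ₑ = ‖g a‖ₑ * ENNReal.ofReal (Φ a) := fun a => by
    rw [enorm_mul, ← ofReal_norm (Φ a : 𝕜), RCLike.norm_ofReal, abs_of_nonneg (hΦ0 a)]
  calc ‖∫ a, g a * (Φ a : 𝕜) ∂μ‖ₑ ^ 2 ≤ (∫⁻ a, ‖g a‖ₑ * ENNReal.ofReal (Φ a) ∂μ) ^ 2 := by
        gcongr
        simpa only [hnorm] using enorm_integral_le_lintegral_enorm (fun a => g a * (Φ a : 𝕜))
    _ ≤ _ := ENNReal.sq_lintegral_mul_le_lintegral_sq_mul hg.enorm hΦ.ennreal_ofReal hΦ1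

end Jensen

section Restriction

variable {V W 𝕜 : Type*} [NormedAddCommGroup V] [MeasurableSpace V] [BorelSpace V]
  [SecondCountableTopology V] {μ : Measure V} [μ.IsAddLeftInvariant] [μ.IsNegInvariant] [SFinite μ]
  [MeasurableSpace W] {ν : Measure W} [SFinite ν] [RCLike 𝕜]

theorem lintegral_enorm_integral_mul_sub_sq_le {f : V → 𝕜} (hf : Measurable f) {Φ : V → ℝ}
    (hΦ : Measurable Φ) (hΦ0 : ∀ y, 0 ≤ Φ y) (hΦ1 : ∫⁻ y, ENNReal.ofReal (Φ y) ∂μ = 1)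
    {L : W → V} (hL : Measurable L) {C : ℝ≥0∞}
    (hC : ∀ y, ∫⁻ w, ENNReal.ofReal (Φ (L w - y)) ∂ν ≤ C) :
    ∫⁻ w, ‖∫ y, f (L w - y) * (Φ y : 𝕜) ∂μ‖ₑ ^ 2 ∂ν ≤ C * ∫⁻ y, ‖f y‖ₑ ^ 2 ∂μ := by
  have hf2 : Measurable fun y => ‖f y‖ₑ ^ 2 := hf.enorm.pow_const 2
  calc ∫⁻ w, ‖∫ y, f (L w - y) * (Φ y : 𝕜) ∂μ‖ₑ ^ 2 ∂ν
      ≤ ∫⁻ w, ∫⁻ y, ‖f (L w - y)‖ₑ ^ 2 * ENNReal.ofReal (Φ y) ∂μ ∂ν := by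
        gcongr with w
        exact enorm_integral_mul_ofReal_sq_le (by fun_prop) hΦ.aemeasurable hΦ0 hΦ1
    _ = ∫⁻ w, ∫⁻ y, ‖f y‖ₑ ^ 2 * ENNReal.ofReal (Φ (L w - y)) ∂μ ∂ν := by
        congr with w
        simpa only [sub_sub_cancel] using
          lintegral_sub_left_eq_self (fun y => ‖f y‖ₑ ^ 2 * ENNReal.ofReal (Φ (L w - y))) (L w)
    _ = ∫⁻ y, ‖f y‖ₑ ^ 2 * ∫⁻ w, ENNReal.ofReal (Φ (L w - y)) ∂ν ∂μ := by
        rw [lintegral_lintegral_swap (by fun_prop)]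
        congr with y
        exact lintegral_const_mul _ (by fun_prop)
    _ ≤ ∫⁻ y, ‖f y‖ₑ ^ 2 * C ∂μ := by gcongr with y; exact hC y
    _ = C * ∫⁻ y, ‖f y‖ₑ ^ 2 ∂μ := by rw [lintegral_mul_const _ hf2, mul_comm]

end Restriction

theorem app_sub {k m : ℕ} (a c : E k) (b d : E m) : app a b - app c d = app (a - c) (b - d) := by
  ext i
  induction i using Fin.addCases <;> simp [app]

theorem norm_app_sq {k m : ℕ} (a : E k) (b : E m) : ‖app a b‖ ^ 2 = ‖a‖ ^ 2 + ‖b‖ ^ 2 := by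
  simp only [PiLp.norm_sq_eq_of_L2, Fin.sum_univ_add]
  simp [app]

theorem exists_app_eq {k m : ℕ} (y : E (k + m)) : ∃ a b, app a b = y :=
  ⟨WithLp.toLp 2 fun i => y (Fin.castAdd m i), WithLp.toLp 2 fun i => y (Fin.natAdd k i), by
    ext i; exact congrFun Fin.append_castAdd_natAdd i⟩

@[fun_prop]
theorem continuous_app_zero {k m : ℕ} : Continuous fun a : E k => app a (0 : E m) := by
  unfold app; fun_prop

def heatKernel (n : ℕ) (t : ℝ) (x : E n) : ℝ :=
  (4 * π * t) ^ (-(n : ℝ) / 2) * exp (-‖x‖ ^ 2 / (4 * t))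

section HeatKernel

variable {n : ℕ} {t : ℝ}

theorem heatKernel_nonneg (ht : 0 < t) (x : E n) : 0 ≤ heatKernel n t x := by
  unfold heatKernel; positivity

@[fun_prop]
theorem continuous_heatKernel : Continuous (heatKernel n t) := by
  unfold heatKernel; fun_prop

theorem heatKernel_le (ht : 0 < t) (x : E n) :
    heatKernel n t x ≤ (4 * π * t) ^ (-(n : ℝ) / 2) :=
  mul_le_of_le_one_right (by positivity)
    (exp_le_one_iff.2 (div_nonpos_of_nonpos_of_nonneg (by simp) (by positivity)))

theorem heatKernel_app {k m : ℕ} (ht : 0 < t) (a : E k) (b : E m) :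
    heatKernel (k + m) t (app a b) = heatKernel k t a * heatKernel m t b := by
  have h4πt : 0 < 4 * π * t := by positivity
  have hexp : (-(((k + m : ℕ) : ℝ)) / 2) = -(k : ℝ) / 2 + -(m : ℝ) / 2 := by push_cast; ring
  simp only [heatKernel, hexp, rpow_add h4πt, norm_app_sq, add_div, neg_add, exp_add]
  ring

theorem integral_heatKernel (ht : 0 < t) : ∫ x, heatKernel n t x = 1 := by
  have h4πt : 0 < 4 * π * t := by positivity
  have hgauss := GaussianFourier.integral_rexp_neg_mul_sq_norm (V := E n)
    (inv_pos.2 (by positivity : 0 < 4 * t))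
  simp only [finrank_euclideanSpace_fin, div_inv_eq_mul, ← mul_assoc] at hgauss
  have hexp : ∀ x : E n, -‖x‖ ^ 2 / (4 * t) = -(4 * t)⁻¹ * ‖x‖ ^ 2 := fun x => by ring
  simp only [heatKernel, integral_const_mul, hexp, hgauss, mul_comm π 4, ← rpow_add h4πt]
  ring_nf
  exact rpow_zero _

theorem lintegral_heatKernel (ht : 0 < t) : ∫⁻ x, ENNReal.ofReal (heatKernel n t x) = 1 := by
  have hint : ∫ x, heatKernel n t x = 1 := integral_heatKernel ht
  rw [← ofReal_integral_eq_lintegral_ofReal (.of_integral_ne_zero (by simp [hint]))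
    (.of_forall (heatKernel_nonneg ht)), hint, ENNReal.ofReal_one]

theorem lintegral_heatKernel_app_sub_le {k m : ℕ} (ht : 0 < t) (y : E (k + m)) :
    ∫⁻ a, ENNReal.ofReal (heatKernel (k + m) t (app a 0 - y)) ≤
      ENNReal.ofReal ((4 * π * t) ^ (-(m : ℝ) / 2)) := by
  obtain ⟨c, b, rfl⟩ := exists_app_eq y
  simp only [app_sub, zero_sub, heatKernel_app ht, ENNReal.ofReal_mul (heatKernel_nonneg ht _)]
  rw [lintegral_mul_const _ (by fun_prop),
    lintegral_sub_right_eq_self (fun a => ENNReal.ofReal (heatKernel k t a)),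
    lintegral_heatKernel ht, one_mul]
  exact ENNReal.ofReal_le_ofReal (heatKernel_le ht _)

end HeatKernel

theorem integral_norm_sq_eq_toReal_lintegral {α G : Type*} [MeasurableSpace α] {μ : Measure α}
    [NormedAddCommGroup G] {g : α → G} (hg : AEStronglyMeasurable g μ) :
    ∫ a, ‖g a‖ ^ 2 ∂μ = (∫⁻ a, ‖g a‖ₑ ^ 2 ∂μ).toReal := by
  rw [integral_eq_lintegral_of_nonneg_ae (.of_forall fun a => sq_nonneg _) (hg.norm.pow 2)]
  congr with a
  rw [ENNReal.ofReal_pow (norm_nonneg _), ofReal_norm]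

theorem SchwartzMap.lintegral_enorm_sq_ne_top {D G : Type*} [NormedAddCommGroup D]
    [NormedSpace ℝ D] [MeasurableSpace D] [OpensMeasurableSpace D] [NormedAddCommGroup G]
    [NormedSpace ℝ G] (F : SchwartzMap D G) (μ : Measure D) [μ.HasTemperateGrowth] :
    ∫⁻ x, ‖F x‖ₑ ^ 2 ∂μ ≠ ⊤ := by
  simpa using (lintegral_rpow_enorm_lt_top_of_eLpNorm_lt_top two_ne_zero ENNReal.ofNat_ne_top
    (F.eLpNorm_lt_top 2 μ)).ne

theorem stmt8_general (k m : ℕ) (t : ℝ) (ht : 0 < t)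
    (F : SchwartzMap (E (k + m)) ℂ) :
    (∫ x' : E k,
        ‖∫ y : E (k + m),
            F (app x' 0 - y) *
              (((4 * π * t) ^ (-((k + m : ℕ) : ℝ) / 2) *
                  Real.exp (-‖y‖ ^ 2 / (4 * t)) : ℝ) : ℂ)‖ ^ 2) ^ ((1 : ℝ) / 2) ≤
      (4 * π * t) ^ (-((m : ℝ)) / 4) * (∫ x : E (k + m), ‖F x‖ ^ 2) ^ ((1 : ℝ) / 2) := by
  change (∫ x', ‖∫ y, F (app x' 0 - y) * (heatKernel (k + m) t y : ℂ)‖ ^ 2) ^ ((1 : ℝ) / 2) ≤ _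
  have hC : 0 ≤ (4 * π * t) ^ (-(m : ℝ) / 2) := by positivity
  have hbound := lintegral_enorm_integral_mul_sub_sq_le F.continuous.measurable
    continuous_heatKernel.measurable (heatKernel_nonneg ht) (lintegral_heatKernel ht)
    continuous_app_zero.measurable (lintegral_heatKernel_app_sub_le ht)
  have hu : AEStronglyMeasurable
      (fun x' : E k => ∫ y, F (app x' 0 - y) * (heatKernel (k + m) t y : ℂ)) :=
    (StronglyMeasurable.integral_prod_right' (f := fun p : E k × E (k + m) =>
      F (app p.1 0 - p.2) * (heatKernel (k + m) t p.2 : ℂ)) (by fun_prop)).aestronglyMeasurable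
  rw [integral_norm_sq_eq_toReal_lintegral hu,
    integral_norm_sq_eq_toReal_lintegral F.continuous.aestronglyMeasurable]
  calc _ ≤ (ENNReal.ofReal ((4 * π * t) ^ (-(m : ℝ) / 2)) * ∫⁻ x, ‖F x‖ₑ ^ 2).toReal
          ^ ((1 : ℝ) / 2) := by
        gcongr
        · exact ENNReal.mul_ne_top ENNReal.ofReal_ne_top (F.lintegral_enorm_sq_ne_top volume)
        · exact hbound
    _ = _ := by
        rw [ENNReal.toReal_mul, ENNReal.toReal_ofReal hC, mul_rpow hC ENNReal.toReal_nonneg,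
          ← rpow_mul (by positivity)]
        ring_nf

/-- For the heat-equation solution `u(x,t) = (F * Φ_t)(x)` on `ℝⁿ = ℝ^k × ℝ^{n-k}` with
`Φ_t(x) = (4πt)^{-n/2} e^{-|x|²/(4t)}` and `H = ℝ^k × {0}`, for every `t > 0`:
`‖u(·,t)|_H‖_{L²(ℝ^k)} ≤ (4πt)^{-(n-k)/4} ‖F‖_{L²(ℝⁿ)}`. -/
theorem stmt8 (k m : ℕ) (hm : 1 ≤ m) (t : ℝ) (ht : 0 < t)
    (F : SchwartzMap (E (k + m)) ℂ) :
    (∫ x' : E k,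
        ‖∫ y : E (k + m),
            F (app x' 0 - y) *
              (((4 * π * t) ^ (-((k + m : ℕ) : ℝ) / 2) *
                  Real.exp (-‖y‖ ^ 2 / (4 * t)) : ℝ) : ℂ)‖ ^ 2) ^ ((1 : ℝ) / 2) ≤
      (4 * π * t) ^ (-((m : ℝ)) / 4) * (∫ x : E (k + m), ‖F x‖ ^ 2) ^ ((1 : ℝ) / 2) :=
  stmt8_general k m t ht F
end
end

section
/- For a Schwartz function F on ℝ^{2d}, ( ∫_{ℝ^d} |F̂(x,x)|² dx )^{1/2} ≤ ( ∫_{ℝ^d} [ ∫_{ℝ^d} |F((x-y)/2, (x+y)/2)| dy ]² dx )^{1/2}. -/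
open MeasureTheory Real
open scoped FourierTransform

noncomputable section

/-!
Let `g(s) = ∫ F(u, s - u) du` be the marginal of `F` along `(u, v) ↦ u + v` and
`h(s) = ∫ |F(u, s - u)| du`. Fubini gives `F̂(x, x) = ĝ(x)`, so by Plancherel the left-hand side
is `‖g‖₂ ≤ ‖h‖₂`, while the substitution `y = x - 2u` shows that the inner integral on the
right-hand side is `2^d h(x)`.
-/

open scoped RealInnerProductSpace InnerProductSpace

section Plancherel

variable {V H : Type*} [NormedAddCommGroup V] [InnerProductSpace ℝ V] [FiniteDimensional ℝ V]
  [MeasurableSpace V] [BorelSpace V]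
  [NormedAddCommGroup H] [InnerProductSpace ℂ H] [CompleteSpace H]

theorem Continuous.integral_norm_sq_fourier {f : V → H} (hc : Continuous f) (hf : Integrable f)
    (hFf : Integrable (𝓕 f)) : ∫ ξ, ‖𝓕 f ξ‖ ^ 2 = ∫ x, ‖f x‖ ^ 2 := by
  have key : ∫ ξ, ⟪𝓕 f ξ, 𝓕 f ξ⟫_ℂ = ∫ x, ⟪f x, 𝓕⁻ (𝓕 f) x⟫_ℂ := by
    have := VectorFourier.integral_sesq_fourierIntegral_eq_neg_flip (innerSL ℂ)
      (L := innerₗ V) continuous_fourierChar continuous_inner hf hFf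
    rwa [flip_innerₗ] at this
  rw [hc.fourierInv_fourier_eq hf hFf] at key
  apply Complex.ofRealLI.injective
  simpa [← LinearIsometry.integral_comp_comm, inner_self_eq_norm_sq_to_K] using key

end Plancherel

variable {k m : ℕ}

def appₗᵢ (k m : ℕ) : WithLp 2 (E k × E m) ≃ₗᵢ[ℝ] E (k + m) :=
  (PiLp.sumPiLpEquivProdLpPiLp 2 (fun _ => ℝ)).symm.trans
    (LinearIsometryEquiv.piLpCongrLeft 2 ℝ ℝ finSumFinEquiv)

lemma appₗᵢ_toLp (a : E k) (b : E m) : appₗᵢ k m (WithLp.toLp 2 (a, b)) = app a b := by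
  ext i
  refine Fin.addCases (fun j => ?_) (fun j => ?_) i <;> simp [appₗᵢ, app]

lemma inner_app (a u : E k) (b v : E m) : ⟪app a b, app u v⟫ = ⟪a, u⟫ + ⟪b, v⟫ := by
  rw [← appₗᵢ_toLp, ← appₗᵢ_toLp, LinearIsometryEquiv.inner_map_map, WithLp.prod_inner_apply]

lemma norm_le_norm_app (a : E k) (b : E m) : ‖a‖ ≤ ‖app a b‖ := by
  rw [← appₗᵢ_toLp, LinearIsometryEquiv.norm_map]
  simpa using WithLp.norm_fst_le (E k) (WithLp.toLp 2 (a, b))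

@[fun_prop]
lemma Continuous.app {X : Type*} [TopologicalSpace X] {f : X → E k} {g : X → E m}
    (hf : Continuous f) (hg : Continuous g) : Continuous fun x => app (f x) (g x) := by
  simp_rw [← appₗᵢ_toLp]
  fun_prop

/-- Coordinates on `ℝ^{2k}` in which the second coordinate is the sum `u + v`. -/
def sumCoordEquiv (k : ℕ) : E k × E k ≃ᵐ E (k + k) :=
  (MeasurableEquiv.shearSubRight (E k)).trans
    ((MeasurableEquiv.toLp 2 (E k × E k)).trans (appₗᵢ k k).toMeasurableEquiv)

lemma sumCoordEquiv_apply (p : E k × E k) : sumCoordEquiv k p = app p.1 (p.2 - p.1) :=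
  appₗᵢ_toLp _ _

lemma measurePreserving_sumCoordEquiv : MeasurePreserving (sumCoordEquiv k) :=
  (appₗᵢ k k).measurePreserving.comp
    ((WithLp.volume_preserving_toLp _ _).comp (measurePreserving_prod_sub volume volume))

lemma MeasureTheory.Integrable.comp_sumCoordEquiv {G : Type*} [NormedAddCommGroup G]
    {f : E (k + k) → G} (hf : Integrable f) :
    Integrable fun p : E k × E k => f (app p.1 (p.2 - p.1)) := by
  simpa only [Function.comp_def, sumCoordEquiv_apply] using
    (measurePreserving_sumCoordEquiv.integrable_comp hf.1).2 hf

section sumMarginal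

variable {G : Type*} [NormedAddCommGroup G] [NormedSpace ℝ G]

/-- The density of the push-forward of `f(u, v) du dv` under `(u, v) ↦ u + v`. -/
def sumMarginal (f : E (k + k) → G) (s : E k) : G := ∫ u, f (app u (s - u))

lemma integral_comp_sumCoordEquiv (f : E (k + k) → G) :
    ∫ p : E k × E k, f (app p.1 (p.2 - p.1)) = ∫ z, f z := by
  simpa only [sumCoordEquiv_apply] using measurePreserving_sumCoordEquiv.integral_comp' f

lemma MeasureTheory.Integrable.sumMarginal {f : E (k + k) → G} (hf : Integrable f) :
    Integrable (sumMarginal f) :=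
  hf.comp_sumCoordEquiv.integral_prod_right

lemma integral_comp_app_half_sub_half_add (f : E (k + k) → G) (x : E k) :
    ∫ y, f (app ((2 : ℝ)⁻¹ • (x - y)) ((2 : ℝ)⁻¹ • (x + y))) = (2 : ℝ) ^ k • sumMarginal f x := by
  have hcoords : ∀ y : E k, (2 : ℝ)⁻¹ • (x + y) = x - (2 : ℝ)⁻¹ • (x - y) := fun y => by module
  simp_rw [hcoords]
  rw [integral_sub_left_eq_self (fun t => f (app ((2 : ℝ)⁻¹ • t) (x - (2 : ℝ)⁻¹ • t))),
    Measure.integral_comp_smul volume (fun u => f (app u (x - u))), finrank_euclideanSpace_fin]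
  simp [sumMarginal, inv_pow]

end sumMarginal

lemma fourier_sumMarginal {H : Type*} [NormedAddCommGroup H] [NormedSpace ℂ H]
    {f : E (k + k) → H} (hf : Integrable f) (x : E k) :
    𝓕 (sumMarginal f) x = 𝓕 f (app x x) := by
  set φ : E (k + k) → H := fun z => 𝐞 (-⟪z, app x x⟫) • f z
  have hφ : Integrable φ := (fourierIntegral_convergent_iff _).2 hf
  have hinner : ∀ u s : E k, ⟪app u (s - u), app x x⟫ = ⟪s, x⟫ := fun u s => by
    rw [inner_app, ← inner_add_left, add_sub_cancel]
  calc 𝓕 (sumMarginal f) x = ∫ s, ∫ u, φ (app u (s - u)) := by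
        simp only [fourier_eq, sumMarginal, φ, hinner, Circle.smul_def, integral_smul]
    _ = 𝓕 f (app x x) := by
        rw [← integral_prod_symm _ hφ.comp_sumCoordEquiv, ← Measure.volume_eq_prod,
          integral_comp_sumCoordEquiv, fourier_eq]

namespace SchwartzMap

variable {D G : Type*} [NormedAddCommGroup D] [NormedSpace ℝ D]
  [NormedAddCommGroup G] [NormedSpace ℝ G]

lemma norm_le_mul_one_add_norm_rpow_neg (f : 𝓢(D, G)) (l : ℕ) (x : D) :
    ‖f x‖ ≤ 2 ^ l * (SchwartzMap.seminorm ℝ 0 0 f + SchwartzMap.seminorm ℝ l 0 f) *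
      (1 + ‖x‖) ^ (-(l : ℝ)) := by
  simpa using pow_mul_le_of_le_of_pow_mul_le (k := 0) (norm_nonneg _) (norm_nonneg _)
    (f.norm_le_seminorm ℝ x) (by simpa using f.norm_pow_mul_le_seminorm ℝ l x)

lemma exists_integrable_bound_app (F : 𝓢(E (k + m), G)) :
    ∃ b : E k → ℝ, Integrable b ∧ ∀ u v, ‖F (app u v)‖ ≤ b u := by
  set l := (volume : Measure (E k)).integrablePower
  refine ⟨fun u => 2 ^ l * (SchwartzMap.seminorm ℝ 0 0 F + SchwartzMap.seminorm ℝ l 0 F) *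
    (1 + ‖u‖) ^ (-(l : ℝ)), (Measure.integrable_pow_neg_integrablePower _).const_mul _,
    fun u v => ?_⟩
  refine (F.norm_le_mul_one_add_norm_rpow_neg l _).trans (mul_le_mul_of_nonneg_left ?_ ?_)
  · exact rpow_le_rpow_of_nonpos (by positivity) (by gcongr; exact norm_le_norm_app u v)
      (by simp)
  · positivity

lemma integrable_comp_app_diag (F : 𝓢(E (k + k), G)) : Integrable fun x : E k => F (app x x) := by
  obtain ⟨b, hb, hFb⟩ := F.exists_integrable_bound_app
  exact hb.mono' (by fun_prop : Continuous fun x : E k => F (app x x)).aestronglyMeasurable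
    (ae_of_all _ fun x => hFb x x)

lemma continuous_sumMarginal (F : 𝓢(E (k + k), G)) : Continuous (sumMarginal F) := by
  obtain ⟨b, hb, hFb⟩ := F.exists_integrable_bound_app
  refine continuous_of_dominated (bound := b) (fun s => ?_) (fun s => ae_of_all _ fun u => hFb u _)
    hb (ae_of_all _ fun u => ?_)
  all_goals fun_prop

lemma exists_bound_sumMarginal_norm (F : 𝓢(E (k + k), G)) :
    ∃ M, ∀ s, sumMarginal (fun z => ‖F z‖) s ≤ M := by
  obtain ⟨b, hb, hFb⟩ := F.exists_integrable_bound_app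
  exact ⟨∫ u, b u, fun s => integral_mono_of_nonneg (ae_of_all _ fun _ => norm_nonneg _) hb
    (ae_of_all _ fun u => hFb u _)⟩

lemma integrable_sumMarginal_norm_sq (F : 𝓢(E (k + k), G)) :
    Integrable fun s => sumMarginal (fun z => ‖F z‖) s ^ 2 := by
  obtain ⟨M, hM⟩ := F.exists_bound_sumMarginal_norm
  have hint := F.integrable.norm.sumMarginal
  simpa only [sq] using hint.bdd_mul (c := M) hint.aestronglyMeasurable (ae_of_all _ fun s =>
    (norm_of_nonneg (integral_nonneg fun _ => norm_nonneg _)).trans_le (hM s))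

end SchwartzMap

theorem stmt11_general (d : ℕ) (F : SchwartzMap (E (d + d)) ℂ) :
    (∫ x : E d, ‖𝓕 (F : E (d + d) → ℂ) (app x x)‖ ^ 2) ^ ((1 : ℝ) / 2) ≤
      (∫ x : E d,
          (∫ y : E d, ‖F (app ((2 : ℝ)⁻¹ • (x - y)) ((2 : ℝ)⁻¹ • (x + y)))‖) ^ 2) ^
        ((1 : ℝ) / 2) := by
  set g := sumMarginal (F : E (d + d) → ℂ)
  set h := sumMarginal fun z => ‖F z‖
  have hfourier : ∀ x, 𝓕 (F : E (d + d) → ℂ) (app x x) = 𝓕 g x :=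
    fun x => (fourier_sumMarginal F.integrable x).symm
  have hrhs : ∀ x, ∫ y, ‖F (app ((2 : ℝ)⁻¹ • (x - y)) ((2 : ℝ)⁻¹ • (x + y)))‖ = 2 ^ d * h x :=
    fun x => by simpa using integral_comp_app_half_sub_half_add (fun z => ‖F z‖) x
  have hFg : Integrable (𝓕 g) := (𝓕 F).integrable_comp_app_diag.congr (ae_of_all _ hfourier)
  simp_rw [hfourier, hrhs]
  rw [F.continuous_sumMarginal.integral_norm_sq_fourier F.integrable.sumMarginal hFg]
  gcongr ?_ ^ _
  refine integral_mono_of_nonneg (ae_of_all _ fun _ => by positivity)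
    ((F.integrable_sumMarginal_norm_sq.const_mul (((2 : ℝ) ^ d) ^ 2)).congr
      (ae_of_all _ fun s => (mul_pow _ _ 2).symm)) (ae_of_all _ fun s => ?_)
  have hgh : ‖g s‖ ≤ h s := norm_integral_le_integral_norm _
  have hh : h s ≤ 2 ^ d * h s :=
    le_mul_of_one_le_left (integral_nonneg fun _ => norm_nonneg _) (one_le_pow₀ one_le_two)
  exact pow_le_pow_left₀ (norm_nonneg _) (hgh.trans hh) 2

/-- Universal diagonal restriction estimate: for `F` Schwartz on `ℝ^{2d}`,
`(∫ |F̂(x,x)|² dx)^{1/2} ≤ (∫ (∫ |F((x-y)/2, (x+y)/2)| dy)² dx)^{1/2}`. -/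
theorem stmt11 (d : ℕ) (hd : 1 ≤ d) (F : SchwartzMap (E (d + d)) ℂ) :
    (∫ x : E d, ‖𝓕 (F : E (d + d) → ℂ) (app x x)‖ ^ 2) ^ ((1 : ℝ) / 2) ≤
      (∫ x : E d,
          (∫ y : E d, ‖F (app ((2 : ℝ)⁻¹ • (x - y)) ((2 : ℝ)⁻¹ • (x + y)))‖) ^ 2) ^
        ((1 : ℝ) / 2) :=
  stmt11_general d F
end
end
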